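/- Let Q be a finite abelian group of m×m unitary complex matrices, let φ ∈ ℂ^m, and suppose the geometrically uniform frame vectors φ_U = Uφ (U ∈ Q) span ℂ^m. Let S = Σ_{U ∈ Q} φ_U φ_U* be the (positive definite) frame operator and let μ_U = S^{-1/2}φ_U be the canonical tight frame vectors. Then for every family {m_U}_{U ∈ Q} of vectors in ℂ^m forming a normalized tight frame, i.e. Σ_{U ∈ Q} m_U m_U* = I, one has Σ_{U ∈ Q} |⟨φ_U, m_U⟩|² ≤ Σ_{U ∈ Q} |⟨φ_U, μ_U⟩|². That is, among all normalized tight frames, the canonical tight frame maximizes the total squared correlation with the original GU frame vectors. -/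

import Mathlib

/-!
The frame operator `S` of a group orbit commutes with every `U ∈ Q`, hence so do its positive
square root `T` and `T⁻¹`, and the correlation `c = ⟨φ_U, T⁻¹ φ_U⟩` does not depend on `U`.
Cauchy–Schwarz for the inner product `(x, y) ↦ ⟨x, T y⟩` bounds `|⟨φ_U, m_U⟩|²` by
`c ⟨m_U, T m_U⟩`, which sums to `c · tr T` for any normalized tight frame `{m_U}`. Finally
`tr T = tr (T⁻¹ S) = ∑_U ⟨φ_U, T⁻¹ φ_U⟩ = |Q| c`, and `|Q| c²` is exactly the correlation of the
canonical tight frame `μ_U = T⁻¹ φ_U`.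
-/

open Matrix
open scoped ComplexOrder

namespace Matrix

variable {n ι R : Type*} [Fintype ι] [CommRing R] [StarRing R]

def frameOperator (f : ι → n → R) : Matrix n n R :=
  ∑ i, vecMulVec (f i) (star (f i))

lemma frameOperator_comp_equiv {ι' : Type*} [Fintype ι'] (f : ι → n → R) (e : ι' ≃ ι) :
    frameOperator (f ∘ e) = frameOperator f :=
  e.sum_comp fun i => vecMulVec (f i) (star (f i))

variable [Fintype n]

lemma trace_mul_frameOperator (M : Matrix n n R) (f : ι → n → R) :
    (M * frameOperator f).trace = ∑ i, star (f i) ⬝ᵥ (M *ᵥ f i) := by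
  simp only [frameOperator, Finset.mul_sum, trace_sum, mul_vecMulVec, trace_vecMulVec,
    dotProduct_comm (M *ᵥ _)]

lemma mul_frameOperator_mul_conjTranspose (A : Matrix n n R) (f : ι → n → R) :
    A * frameOperator f * Aᴴ = frameOperator fun i => A *ᵥ f i := by
  simp only [frameOperator, Finset.mul_sum, Finset.sum_mul, mul_vecMulVec, vecMulVec_mul,
    star_mulVec]

lemma star_mulVec_dotProduct (A : Matrix n n R) (x y : n → R) :
    star (A *ᵥ x) ⬝ᵥ y = star x ⬝ᵥ (Aᴴ *ᵥ y) := by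
  rw [star_mulVec, dotProduct_mulVec]

variable {𝕜 : Type*} [RCLike 𝕜]

lemma PosSemidef.norm_sq_dotProduct_mulVec_le {A : Matrix n n 𝕜} (hA : A.PosSemidef)
    (x y : n → 𝕜) :
    ‖star x ⬝ᵥ (A *ᵥ y)‖ ^ 2 ≤
      RCLike.re (star x ⬝ᵥ (A *ᵥ x)) * RCLike.re (star y ⬝ᵥ (A *ᵥ y)) := by
  let _ := A.toSeminormedAddCommGroup hA
  let _ := A.toInnerProductSpace hA
  have hinner (x y : n → 𝕜) : inner 𝕜 x y = star x ⬝ᵥ (A *ᵥ y) := dotProduct_comm _ _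
  have := inner_mul_inner_self_le (𝕜 := 𝕜) x y
  rwa [norm_inner_symm y x, ← sq, hinner, hinner, hinner] at this

variable [DecidableEq n]

omit [StarRing R] in
lemma commute_inv_left {A B : Matrix n n R} (h : Commute A B) : Commute A⁻¹ B := by
  by_cases hA : IsUnit A
  · rw [← hA.unit_spec, ← coe_units_inv]
    exact (hA.unit_spec ▸ h).units_inv_left
  · rw [nonsing_inv_eq_ringInverse, Ring.inverse_non_unit _ hA]
    exact Commute.zero_left B

lemma commute_of_mul_mul_star_eq {U A : Matrix n n R} (hU : U ∈ unitaryGroup n R)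
    (h : U * A * star U = A) : Commute U A :=
  calc U * A = U * A * (star U * U) := by rw [Unitary.star_mul_self_of_mem hU, Matrix.mul_one]
    _ = A * U := by rw [← Matrix.mul_assoc, h]

lemma commute_frameOperator_orbit (G : Subgroup (unitaryGroup n R)) [Fintype G]
    (φ : n → R) (U : G) :
    Commute (U : Matrix n n R) (frameOperator fun V : G => (V : Matrix n n R) *ᵥ φ) := by
  refine commute_of_mul_mul_star_eq (U : unitaryGroup n R).2 ?_
  rw [star_eq_conjTranspose, mul_frameOperator_mul_conjTranspose]
  convert frameOperator_comp_equiv (fun V : G => (V : Matrix n n R) *ᵥ φ) (Equiv.mulLeft U)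
    using 2
  ext V : 1
  simp [mulVec_mulVec]

lemma star_mulVec_dotProduct_mulVec_mulVec {U A : Matrix n n R} (hU : U ∈ unitaryGroup n R)
    (h : Commute U A) (x y : n → R) :
    star (U *ᵥ x) ⬝ᵥ (A *ᵥ (U *ᵥ y)) = star x ⬝ᵥ (A *ᵥ y) := by
  rw [star_mulVec_dotProduct, mulVec_mulVec, mulVec_mulVec, Matrix.mul_assoc, ← h.eq,
    ← Matrix.mul_assoc, ← star_eq_conjTranspose, Unitary.star_mul_self_of_mem hU,
    Matrix.one_mul]

lemma PosSemidef.commute_of_commute_mul_self {T B : Matrix n n 𝕜} (hT : T.PosSemidef)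
    (h : Commute (T * T) B) : Commute T B := by
  open scoped MatrixOrder in
  rw [← CFC.sqrt_mul_self T hT.nonneg, CFC.sqrt_eq_cfc]
  exact h.cfc_nnreal _

lemma PosDef.norm_sq_dotProduct_le {T : Matrix n n 𝕜} (hT : T.PosDef) (x y : n → 𝕜) :
    ‖star x ⬝ᵥ y‖ ^ 2 ≤
      RCLike.re (star x ⬝ᵥ (T⁻¹ *ᵥ x)) * RCLike.re (star y ⬝ᵥ (T *ᵥ y)) := by
  have hTinv : T⁻¹ * T = 1 := nonsing_inv_mul T ((isUnit_iff_isUnit_det T).mp hT.isUnit)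
  have := hT.posSemidef.norm_sq_dotProduct_mulVec_le (T⁻¹ *ᵥ x) y
  rwa [star_mulVec_dotProduct, star_mulVec_dotProduct, hT.isHermitian.inv, mulVec_mulVec,
    mulVec_mulVec, hTinv, one_mulVec, one_mulVec] at this

theorem sum_norm_sq_dotProduct_tight_le_canonical {T : Matrix n n 𝕜} (hT : T.PosDef)
    {f : ι → n → 𝕜} (hf : frameOperator f = T * T) {c : 𝕜}
    (hc : ∀ i, star (f i) ⬝ᵥ (T⁻¹ *ᵥ f i) = c) {v : ι → n → 𝕜} (hv : frameOperator v = 1) :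
    ∑ i, ‖star (f i) ⬝ᵥ v i‖ ^ 2 ≤ ∑ i, ‖star (f i) ⬝ᵥ (T⁻¹ *ᵥ f i)‖ ^ 2 := by
  have hTinv : T⁻¹ * T = 1 := nonsing_inv_mul T ((isUnit_iff_isUnit_det T).mp hT.isUnit)
  have hnorm (i : ι) : ‖star (f i) ⬝ᵥ (T⁻¹ *ᵥ f i)‖ ^ 2 = RCLike.re c * RCLike.re c := by
    have hnonneg := hT.inv.posSemidef.dotProduct_mulVec_nonneg (f i)
    rw [RCLike.norm_sq_eq_def, (RCLike.nonneg_iff.mp hnonneg).2, hc i, mul_zero, add_zero]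
  calc ∑ i, ‖star (f i) ⬝ᵥ v i‖ ^ 2
      ≤ ∑ i, RCLike.re c * RCLike.re (star (v i) ⬝ᵥ (T *ᵥ v i)) :=
        Finset.sum_le_sum fun i _ => hc i ▸ hT.norm_sq_dotProduct_le (f i) (v i)
    _ = RCLike.re c * RCLike.re (T * frameOperator v).trace := by
        rw [trace_mul_frameOperator, map_sum, Finset.mul_sum]
    _ = RCLike.re c * RCLike.re (T⁻¹ * frameOperator f).trace := by
        rw [hv, hf, Matrix.mul_one, ← Matrix.mul_assoc, hTinv, Matrix.one_mul]
    _ = ∑ i, ‖star (f i) ⬝ᵥ (T⁻¹ *ᵥ f i)‖ ^ 2 := by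
        rw [trace_mul_frameOperator, map_sum, Finset.mul_sum]
        exact Finset.sum_congr rfl fun i _ => by rw [hnorm i, hc i]

end Matrix

theorem stmt_8_general {m : ℕ}
    (Q : Subgroup (Matrix.unitaryGroup (Fin m) ℂ)) [Fintype Q]
    (φ : Fin m → ℂ)
    (S : Matrix (Fin m) (Fin m) ℂ)
    (hS : S = ∑ U : Q, vecMulVec ((U : Matrix (Fin m) (Fin m) ℂ) *ᵥ φ)
          (star ((U : Matrix (Fin m) (Fin m) ℂ) *ᵥ φ)))
    (T : Matrix (Fin m) (Fin m) ℂ)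
    (hT : T.PosDef)
    (hTsq : T * T = S)
    (μ : Q → Fin m → ℂ)
    (hμ : ∀ U : Q, μ U = T⁻¹ *ᵥ ((U : Matrix (Fin m) (Fin m) ℂ) *ᵥ φ))
    (v : Q → Fin m → ℂ)
    (hv : ∑ U : Q, vecMulVec (v U) (star (v U)) = (1 : Matrix (Fin m) (Fin m) ℂ)) :
    ∑ U : Q, ‖star ((U : Matrix (Fin m) (Fin m) ℂ) *ᵥ φ) ⬝ᵥ v U‖ ^ 2 ≤
      ∑ U : Q, ‖star ((U : Matrix (Fin m) (Fin m) ℂ) *ᵥ φ) ⬝ᵥ μ U‖ ^ 2 := by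
  have hframe : frameOperator (fun U : Q => (U : Matrix (Fin m) (Fin m) ℂ) *ᵥ φ) = T * T := by
    rw [hTsq, hS, frameOperator]
  have hcomm (U : Q) : Commute (U : Matrix (Fin m) (Fin m) ℂ) T⁻¹ := by
    have := commute_frameOperator_orbit Q φ U
    rw [hframe] at this
    exact (commute_inv_left (hT.posSemidef.commute_of_commute_mul_self this.symm)).symm
  simp only [hμ]
  exact sum_norm_sq_dotProduct_tight_le_canonical hT hframe
    (c := star φ ⬝ᵥ (T⁻¹ *ᵥ φ))
    (fun U => star_mulVec_dotProduct_mulVec_mulVec (U : unitaryGroup (Fin m) ℂ).2 (hcomm U) φ φ) hv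

/-- Let `{φ_U = Uφ : U ∈ Q}` be a geometrically uniform frame spanning `ℂ^m`
with positive definite frame operator `S`, `T = S^{1/2}` its Hermitian positive definite
square root, and `μ_U = T⁻¹φ_U` the canonical tight frame vectors. Then among all
normalized tight frames `{m_U}` (those with `∑ m_U m_U* = I`), the canonical tight frame
maximizes the total squared correlation `∑_U |⟨φ_U, m_U⟩|²`. -/
theorem stmt_8 {m : ℕ} (hm : 0 < m)
    (Q : Subgroup (Matrix.unitaryGroup (Fin m) ℂ)) [Fintype Q]
    (habelian : ∀ U V : Q, U * V = V * U)
    (φ : Fin m → ℂ)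
    (hspan : Submodule.span ℂ
      (Set.range fun U : Q => (U : Matrix (Fin m) (Fin m) ℂ) *ᵥ φ) = ⊤)
    (S : Matrix (Fin m) (Fin m) ℂ)
    (hS : S = ∑ U : Q, vecMulVec ((U : Matrix (Fin m) (Fin m) ℂ) *ᵥ φ)
          (star ((U : Matrix (Fin m) (Fin m) ℂ) *ᵥ φ)))
    (T : Matrix (Fin m) (Fin m) ℂ)
    (hT : T.PosDef)
    (hTsq : T * T = S)
    (μ : Q → Fin m → ℂ)
    (hμ : ∀ U : Q, μ U = T⁻¹ *ᵥ ((U : Matrix (Fin m) (Fin m) ℂ) *ᵥ φ))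
    (v : Q → Fin m → ℂ)
    (hv : ∑ U : Q, vecMulVec (v U) (star (v U)) = (1 : Matrix (Fin m) (Fin m) ℂ)) :
    ∑ U : Q, ‖star ((U : Matrix (Fin m) (Fin m) ℂ) *ᵥ φ) ⬝ᵥ v U‖ ^ 2 ≤
      ∑ U : Q, ‖star ((U : Matrix (Fin m) (Fin m) ℂ) *ᵥ φ) ⬝ᵥ μ U‖ ^ 2 :=
  stmt_8_general Q φ S hS T hT hTsq μ hμ v hv
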